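/- For fixed t ∈ ℝ and x ∈ ℝ, as a → 1/2 from above, the Kuznetsov-Ma breather B_KM(t,x; a) converges pointwise to the Peregrine breather B_P(t,x) = e^{it}(1 - 4(1+2it)/(1+4t²+2x²)). -/

import Mathlib

open Complex Filter Topology

/-- Partial derivative in the first (time) variable. -/
noncomputable def pdt (u : ℝ → ℝ → ℂ) (t x : ℝ) : ℂ := deriv (fun s => u s x) t

/-- Partial derivative in the second (space) variable. -/
noncomputable def pdx (u : ℝ → ℝ → ℂ) (t x : ℝ) : ℂ := deriv (fun y => u t y) x

/-- `u` solves the cubic focusing NLS `i u_t + u_xx + |u|² u = 0`. -/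
def IsNLSSolution (u : ℝ → ℝ → ℂ) : Prop :=
  ∀ t x : ℝ, Complex.I * pdt u t x + pdx (pdx u) t x
    + (((‖u t x‖ : ℝ) : ℂ))^2 * u t x = 0

/-- The Peregrine breather. -/
noncomputable def BP (t x : ℝ) : ℂ :=
  Complex.exp (Complex.I * t) *
    (1 - 4 * (1 + 2 * Complex.I * t) / (1 + 4 * (t:ℂ)^2 + 2 * (x:ℂ)^2))

/-- Parameter `α` of the Kuznetsov-Ma breather. -/
noncomputable def KMalpha (a : ℝ) : ℝ := Real.sqrt (8 * a * (2 * a - 1))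

/-- Parameter `β` of the Kuznetsov-Ma breather. -/
noncomputable def KMbeta (a : ℝ) : ℝ := Real.sqrt (2 * (2 * a - 1))

/-- The Kuznetsov-Ma breather with parameter `a > 1/2`. -/
noncomputable def BKM (a : ℝ) (t x : ℝ) : ℂ :=
  Complex.exp (Complex.I * t) *
    (1 - Real.sqrt 2 * (KMbeta a) *
      (((KMbeta a : ℂ))^2 * Real.cos (KMalpha a * t)
        + Complex.I * (KMalpha a) * Real.sin (KMalpha a * t)) /
      ((KMalpha a : ℂ) * Real.cosh (KMbeta a * x)
        - (Real.sqrt 2 : ℂ) * (KMbeta a) * Real.cos (KMalpha a * t)))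

/-! With `u = √(2a - 1)` one has `β = √2 u` and `α = 2u√(2a)`, so the numerator and the
denominator of the rational part of `B_KM` both vanish to order `u³` as `a → 1/2⁺`. After
dividing both by `u³`, every term is built from `sin (s c) / s → c`,
`(1 - cos (s c)) / s² → c² / 2` and `(cosh (s c) - 1) / s² → c² / 2` (with `s = α` or `β`)
and the difference quotient of `√` at `1`; the quotient then tends to
`4 (1 + 2it) / (1 + 4t² + 2x²)`. -/

theorem HasDerivAt.tendsto_div_of_apply_zero {f : ℝ → ℝ} {f' : ℝ} (hf : HasDerivAt f f' 0)
    (h0 : f 0 = 0) : Tendsto (fun s => f s / s) (𝓝[≠] 0) (𝓝 f') := by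
  simpa [h0, div_eq_inv_mul] using hf.tendsto_slope_zero

namespace Real

theorem tendsto_sin_mul_div_self (c : ℝ) :
    Tendsto (fun s => sin (s * c) / s) (𝓝[≠] 0) (𝓝 c) := by
  simpa using (hasDerivAt_mul_const c).sin.tendsto_div_of_apply_zero (by simp)

theorem tendsto_sinh_mul_div_self (c : ℝ) :
    Tendsto (fun s => sinh (s * c) / s) (𝓝[≠] 0) (𝓝 c) := by
  simpa using (hasDerivAt_mul_const c).sinh.tendsto_div_of_apply_zero (by simp)

theorem tendsto_one_sub_cos_mul_div_sq (c : ℝ) :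
    Tendsto (fun s => (1 - cos (s * c)) / s ^ 2) (𝓝[≠] 0) (𝓝 (c ^ 2 / 2)) := by
  have half_angle (s : ℝ) : (1 - cos (s * c)) / s ^ 2 = 2 * (sin (s * (c / 2)) / s) ^ 2 := by
    rw [show s * c = 2 * (s * (c / 2)) by ring, cos_two_mul_eq_one_sub]
    ring
  convert ((tendsto_sin_mul_div_self (c / 2)).pow 2).const_mul 2 using 2
  · exact half_angle _
  · ring

theorem tendsto_cosh_mul_sub_one_div_sq (c : ℝ) :
    Tendsto (fun s => (cosh (s * c) - 1) / s ^ 2) (𝓝[≠] 0) (𝓝 (c ^ 2 / 2)) := by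
  have half_angle (s : ℝ) : (cosh (s * c) - 1) / s ^ 2 = 2 * (sinh (s * (c / 2)) / s) ^ 2 := by
    rw [show s * c = 2 * (s * (c / 2)) by ring, cosh_two_mul, cosh_sq]
    ring
  convert ((tendsto_sinh_mul_div_self (c / 2)).pow 2).const_mul 2 using 2
  · exact half_angle _
  · ring

theorem tendsto_sqrt_nhdsNE_zero {α : Type*} {l : Filter α} {f : α → ℝ}
    (hf : Tendsto f l (𝓝 0)) (hpos : ∀ᶠ a in l, 0 < f a) :
    Tendsto (fun a => √(f a)) l (𝓝[≠] 0) := by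
  refine tendsto_nhdsWithin_iff.mpr ⟨?_, ?_⟩
  · simpa [Function.comp_def] using (continuous_sqrt.tendsto 0).comp hf
  · filter_upwards [hpos] with a ha using (sqrt_pos.mpr ha).ne'

end Real

theorem tendsto_KMalpha : Tendsto KMalpha (𝓝[>] (1 / 2)) (𝓝[≠] 0) := by
  refine Real.tendsto_sqrt_nhdsNE_zero ?_ ?_
  · exact ((by fun_prop : Continuous fun a : ℝ => 8 * a * (2 * a - 1)).tendsto' _ _
      (by norm_num)).mono_left nhdsWithin_le_nhds
  · filter_upwards [self_mem_nhdsWithin] with a (ha : 1 / 2 < a)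
    nlinarith

theorem tendsto_KMbeta : Tendsto KMbeta (𝓝[>] (1 / 2)) (𝓝[≠] 0) := by
  refine Real.tendsto_sqrt_nhdsNE_zero ?_ ?_
  · exact ((by fun_prop : Continuous fun a : ℝ => 2 * (2 * a - 1)).tendsto' _ _
      (by norm_num)).mono_left nhdsWithin_le_nhds
  · filter_upwards [self_mem_nhdsWithin] with a (ha : 1 / 2 < a)
    linarith

theorem tendsto_sqrt_two_mul_sub_one_div :
    Tendsto (fun a : ℝ => (√(2 * a) - 1) / (2 * a - 1)) (𝓝[>] (1 / 2)) (𝓝 (1 / 2)) := by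
  have h2a : Tendsto (fun a : ℝ => 2 * a) (𝓝[>] (1 / 2)) (𝓝[≠] 1) := by
    refine tendsto_nhdsWithin_iff.mpr ⟨?_, ?_⟩
    · exact ((by fun_prop : Continuous fun a : ℝ => 2 * a).tendsto' _ _
        (by norm_num)).mono_left nhdsWithin_le_nhds
    · filter_upwards [self_mem_nhdsWithin] with a (ha : 1 / 2 < a)
      exact (by linarith : 2 * a ≠ 1)
  have := ((Real.hasDerivAt_sqrt one_ne_zero).tendsto_slope).comp h2a
  simp only [Function.comp_def, slope_def_field, Real.sqrt_one] at this
  convert this using 2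
  norm_num

/-- `KMnum` and `KMden` are the numerator and the denominator of the rational part of
`BKM a t x`, each divided by `(2a - 1)^(3/2)` and written through quotients that have finite
limits as `a → 1/2⁺`. -/
noncomputable def KMnum (a t : ℝ) : ℂ :=
  4 * Real.cos (KMalpha a * t) + I * (16 * a * (Real.sin (KMalpha a * t) / KMalpha a) : ℝ)

noncomputable def KMden (a t x : ℝ) : ℝ :=
  2 * (2 * √(2 * a) * ((Real.cosh (KMbeta a * x) - 1) / KMbeta a ^ 2)
    + (√(2 * a) - 1) / (2 * a - 1) + 8 * a * ((1 - Real.cos (KMalpha a * t)) / KMalpha a ^ 2))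

theorem BKM_eq_KMnum_div_KMden {a : ℝ} (ha : 1 / 2 < a) (t x : ℝ) :
    BKM a t x = exp (I * t) * (1 - KMnum a t / KMden a t x) := by
  obtain ⟨u, hu0, hu2, hβ⟩ : ∃ u : ℝ, 0 < u ∧ u ^ 2 = 2 * a - 1 ∧ KMbeta a = √2 * u :=
    ⟨_, Real.sqrt_pos.mpr (by linarith), Real.sq_sqrt (by linarith), Real.sqrt_mul zero_le_two _⟩
  obtain ⟨v, hv0, hv2, hv⟩ : ∃ v : ℝ, 0 < v ∧ v ^ 2 = 2 * a ∧ √(2 * a) = v :=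
    ⟨_, Real.sqrt_pos.mpr (by linarith), Real.sq_sqrt (by linarith), rfl⟩
  have hα : KMalpha a = 2 * u * v := by
    rw [KMalpha, show 8 * a * (2 * a - 1) = (2 * u * v) ^ 2 by
      rw [mul_pow, mul_pow, hu2, hv2]; ring, Real.sqrt_sq (by positivity)]
  have hs2 : (√2 : ℂ) ^ 2 = 2 := by exact_mod_cast Real.sq_sqrt zero_le_two
  have huC : (u : ℂ) ≠ 0 := by exact_mod_cast hu0.ne'
  have hvC : (v : ℂ) ≠ 0 := by exact_mod_cast hv0.ne'
  have hu2' : 2 * (a : ℂ) - 1 = u ^ 2 := by exact_mod_cast hu2.symm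
  have ha' : (a : ℂ) = v ^ 2 / 2 := by exact_mod_cast (by linarith : a = v ^ 2 / 2)
  have hnum : (√2 * KMbeta a : ℂ) * ((KMbeta a : ℂ) ^ 2 * Real.cos (KMalpha a * t)
      + I * KMalpha a * Real.sin (KMalpha a * t)) = u ^ 3 * KMnum a t := by
    rw [KMnum, hα, hβ]
    generalize Real.cos _ = C
    generalize Real.sin _ = S
    push_cast
    rw [ha']
    field_simp
    rw [hs2]
    ring
  have hden : (KMalpha a : ℂ) * Real.cosh (KMbeta a * x)
      - (√2 : ℂ) * KMbeta a * Real.cos (KMalpha a * t) = u ^ 3 * KMden a t x := by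
    rw [KMden, hα, hβ, hv]
    generalize Real.cos _ = C
    generalize Real.cosh _ = H
    push_cast
    rw [hu2', ha']
    field_simp
    rw [hs2]
    ring
  rw [BKM, hnum, hden, mul_div_mul_left _ _ (pow_ne_zero 3 huC)]

theorem tendsto_KMnum (t : ℝ) :
    Tendsto (fun a => KMnum a t) (𝓝[>] (1 / 2)) (𝓝 (4 + I * (8 * t : ℝ))) := by
  have hcos : Tendsto (fun a => Real.cos (KMalpha a * t)) (𝓝[>] (1 / 2)) (𝓝 1) := by
    have hαt : Tendsto (fun a => KMalpha a * t) (𝓝[>] (1 / 2)) (𝓝 0) := by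
      simpa using (tendsto_KMalpha.mono_right nhdsWithin_le_nhds).mul_const t
    simpa [Function.comp_def] using (Real.continuous_cos.tendsto 0).comp hαt
  have hsin : Tendsto (fun a => 16 * a * (Real.sin (KMalpha a * t) / KMalpha a))
      (𝓝[>] (1 / 2)) (𝓝 (8 * t)) := by
    convert ((tendsto_id.mono_left nhdsWithin_le_nhds).const_mul 16).mul
      ((Real.tendsto_sin_mul_div_self t).comp tendsto_KMalpha) using 2
    · rfl
    · ring
  simpa [KMnum] using ((continuous_ofReal.tendsto _).comp hcos).const_mul 4 |>.add
    (((continuous_ofReal.tendsto _).comp hsin).const_mul I)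

theorem tendsto_KMden (t x : ℝ) :
    Tendsto (KMden · t x) (𝓝[>] (1 / 2)) (𝓝 (1 + 4 * t ^ 2 + 2 * x ^ 2)) := by
  have hsqrt : Tendsto (fun a : ℝ => √(2 * a)) (𝓝[>] (1 / 2)) (𝓝 1) :=
    ((by fun_prop : Continuous fun a : ℝ => √(2 * a)).tendsto' _ _
      (by norm_num)).mono_left nhdsWithin_le_nhds
  have hid : Tendsto (fun a : ℝ => a) (𝓝[>] (1 / 2)) (𝓝 (1 / 2)) :=
    tendsto_id.mono_left nhdsWithin_le_nhds
  have hcosh := (Real.tendsto_cosh_mul_sub_one_div_sq x).comp tendsto_KMbeta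
  have hcos := (Real.tendsto_one_sub_cos_mul_div_sq t).comp tendsto_KMalpha
  convert ((((hsqrt.const_mul 2).mul hcosh).add tendsto_sqrt_two_mul_sub_one_div).add
    ((hid.const_mul 8).mul hcos)).const_mul 2 using 2
  · rfl
  · ring

theorem KM_to_peregrine_limit (t x : ℝ) :
    Filter.Tendsto (fun a : ℝ => BKM a t x)
      (nhdsWithin (1/2) (Set.Ioi (1/2))) (nhds (BP t x)) := by
  set D : ℝ := 1 + 4 * t ^ 2 + 2 * x ^ 2
  have hD : (D : ℂ) ≠ 0 := by exact_mod_cast (by positivity : 0 < D).ne'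
  have hlim := (((tendsto_KMnum t).div ((continuous_ofReal.tendsto D).comp (tendsto_KMden t x))
    hD).const_sub 1).const_mul (exp (I * t))
  have hBP : exp (I * t) * (1 - (4 + I * (8 * t : ℝ)) / D) = BP t x := by
    rw [BP]; push_cast [D]; ring
  rw [hBP] at hlim
  refine hlim.congr' ?_
  filter_upwards [self_mem_nhdsWithin] with a ha
  exact (BKM_eq_KMnum_div_KMden ha t x).symm
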